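/- arXiv:2503.22762 — 3 statements merged into one kernel-verified Lean document; each statement's English description precedes it below -/
import Mathlib

section
/- Fix a ∈ Fin 2 and c ∈ Fin K. For x ∈ 𝒳 with μ{X = x, A = a, C = c} > 0 define the Bayesian optimal score r_y(x) = μ{Y = y, X = x, A = a, C = c} / μ{X = x, A = a, C = c}. Let θ ∈ ℝ^N with θ_y ≥ 0 for all y, and let h_θ be a predictor such that for every x with μ{X = x, A = a, C = c} > 0 one has θ_{h_θ(x,a,c)} · r_{h_θ(x,a,c)}(x) = max_{y ∈ Fin N} θ_y · r_y(x). Then for every predictor h: Σ_{y ∈ Fin N} θ_y · μ{h(X,A,C) = y and Y = y and A = a and C = c} ≤ Σ_{y ∈ Fin N} θ_y · μ{h_θ(X,A,C) = y and Y = y and A = a and C = c}. -/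
open scoped Classical
open Finset

/-- Probability of an event under a finite mass function `μ`. -/
noncomputable def pr {Ω : Type*} [Fintype Ω] (μ : Ω → ℝ) (P : Ω → Prop) : ℝ :=
  ∑ ω : Ω, if P ω then μ ω else 0

/-- `μ` is a probability mass function on the finite type `Ω`. -/
structure IsProbMass {Ω : Type*} [Fintype Ω] (μ : Ω → ℝ) : Prop where
  nonneg : ∀ ω, 0 ≤ μ ω
  total : ∑ ω : Ω, μ ω = 1

/-- True positive rate of the predictor `h` for class `y`, group `a` and client `c`:
`TP_{ac}^y(h) = μ{h(X,A,C) = y ∧ Y = y ∧ A = a ∧ C = c} / μ{Y = y ∧ A = a ∧ C = c}`. -/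
noncomputable def TP {Ω 𝒳 : Type*} [Fintype Ω] {K N : ℕ} (μ : Ω → ℝ)
    (X : Ω → 𝒳) (A : Ω → Fin 2) (C : Ω → Fin K) (Y : Ω → Fin N)
    (h : 𝒳 × Fin 2 × Fin K → Fin N) (y : Fin N) (a : Fin 2) (c : Fin K) : ℝ :=
  pr μ (fun ω => h (X ω, A ω, C ω) = y ∧ Y ω = y ∧ A ω = a ∧ C ω = c) /
    pr μ (fun ω => Y ω = y ∧ A ω = a ∧ C ω = c)

/-- Bayesian optimal score for group `a`, client `c`:
`r_y(x) = μ{Y = y ∧ X = x ∧ A = a ∧ C = c} / μ{X = x ∧ A = a ∧ C = c}`. -/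
noncomputable def score {Ω 𝒳 : Type*} [Fintype Ω] {K N : ℕ} (μ : Ω → ℝ)
    (X : Ω → 𝒳) (A : Ω → Fin 2) (C : Ω → Fin K) (Y : Ω → Fin N)
    (a : Fin 2) (c : Fin K) (y : Fin N) (x : 𝒳) : ℝ :=
  pr μ (fun ω => Y ω = y ∧ X ω = x ∧ A ω = a ∧ C ω = c) /
    pr μ (fun ω => X ω = x ∧ A ω = a ∧ C ω = c)

/-- `h` is a derived predictor for `(a, c)` and weight vector `θ`:
for every `x` in the support, `θ_{h(x,a,c)} ⬝ r_{h(x,a,c)}(x) = max_y θ_y ⬝ r_y(x)`. -/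
def IsDerivedPredictor {Ω 𝒳 : Type*} [Fintype Ω] {K N : ℕ} (μ : Ω → ℝ)
    (X : Ω → 𝒳) (A : Ω → Fin 2) (C : Ω → Fin K) (Y : Ω → Fin N)
    (a : Fin 2) (c : Fin K) (θ : Fin N → ℝ) (h : 𝒳 × Fin 2 × Fin K → Fin N) : Prop :=
  ∀ x : 𝒳, 0 < pr μ (fun ω => X ω = x ∧ A ω = a ∧ C ω = c) →
    IsGreatest (Set.range fun y => θ y * score μ X A C Y a c y x)
      (θ (h (x, a, c)) * score μ X A C Y a c (h (x, a, c)) x)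

/-- The region under the ROC hypersurface `D_{ac}`, where `hp θ` is the chosen derived
predictor for weight vector `θ`. -/
def RUS {Ω 𝒳 : Type*} [Fintype Ω] {K N : ℕ} (μ : Ω → ℝ)
    (X : Ω → 𝒳) (A : Ω → Fin 2) (C : Ω → Fin K) (Y : Ω → Fin N)
    (a : Fin 2) (c : Fin K)
    (hp : (Fin N → ℝ) → 𝒳 × Fin 2 × Fin K → Fin N) : Set (Fin N → ℝ) :=
  ⋂ θ ∈ {θ : Fin N → ℝ | ∀ y, 0 ≤ θ y},
    {v : Fin N → ℝ | (∀ y, v y ∈ Set.Icc (0 : ℝ) 1) ∧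
      ∑ y : Fin N, θ y * (pr μ (fun ω => Y ω = y ∧ A ω = a ∧ C ω = c) /
          pr μ (fun ω => A ω = a ∧ C ω = c)) * v y ≤
      ∑ y : Fin N, θ y * (pr μ (fun ω => Y ω = y ∧ A ω = a ∧ C ω = c) /
          pr μ (fun ω => A ω = a ∧ C ω = c)) * TP μ X A C Y (hp θ) y a c}


lemma pr_nonneg {Ω : Type*} [Fintype Ω] {μ : Ω → ℝ} (hμ : ∀ ω, 0 ≤ μ ω) (P : Ω → Prop) :
    0 ≤ pr μ P :=
  Finset.sum_nonneg fun ω _ => by by_cases h : P ω <;> simp [h, hμ ω]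

lemma pr_mono {Ω : Type*} [Fintype Ω] {μ : Ω → ℝ} (hμ : ∀ ω, 0 ≤ μ ω) {P Q : Ω → Prop}
    (h : ∀ ω, P ω → Q ω) : pr μ P ≤ pr μ Q := by
  apply Finset.sum_le_sum
  intro ω _
  by_cases hP : P ω
  · simp [hP, h ω hP]
  · by_cases hQ : Q ω <;> simp [hP, hQ, hμ ω]

lemma sum_theta_pr {Ω 𝒳 : Type*} [Fintype Ω] [Fintype 𝒳] {K N : ℕ}
    (μ : Ω → ℝ) (X : Ω → 𝒳) (A : Ω → Fin 2) (C : Ω → Fin K) (Y : Ω → Fin N)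
    (a : Fin 2) (c : Fin K) (θ : Fin N → ℝ) (g : 𝒳 × Fin 2 × Fin K → Fin N) :
    ∑ y : Fin N, θ y *
        pr μ (fun ω => g (X ω, A ω, C ω) = y ∧ Y ω = y ∧ A ω = a ∧ C ω = c) =
    ∑ x : 𝒳, θ (g (x, a, c)) *
        pr μ (fun ω => Y ω = g (x, a, c) ∧ X ω = x ∧ A ω = a ∧ C ω = c) := by
  have L : ∑ y : Fin N, θ y *
        pr μ (fun ω => g (X ω, A ω, C ω) = y ∧ Y ω = y ∧ A ω = a ∧ C ω = c) =
      ∑ ω : Ω, if g (X ω, A ω, C ω) = Y ω ∧ A ω = a ∧ C ω = c then θ (Y ω) * μ ω else 0 := by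
    unfold pr
    simp_rw [Finset.mul_sum]
    rw [Finset.sum_comm]
    refine Finset.sum_congr rfl fun ω _ => ?_
    rw [Finset.sum_eq_single (Y ω)]
    · by_cases h : g (X ω, A ω, C ω) = Y ω ∧ A ω = a ∧ C ω = c
      · simp [h.1, h.2.1, h.2.2, mul_ite]
      · have : ¬ (g (X ω, A ω, C ω) = Y ω ∧ Y ω = Y ω ∧ A ω = a ∧ C ω = c) := by tauto
        simp [this, h]
    · intro y _ hy
      simp [Ne.symm hy]
    · simp
  have R : ∑ x : 𝒳, θ (g (x, a, c)) *
        pr μ (fun ω => Y ω = g (x, a, c) ∧ X ω = x ∧ A ω = a ∧ C ω = c) =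
      ∑ ω : Ω, if g (X ω, A ω, C ω) = Y ω ∧ A ω = a ∧ C ω = c then θ (Y ω) * μ ω else 0 := by
    unfold pr
    simp_rw [Finset.mul_sum]
    rw [Finset.sum_comm]
    refine Finset.sum_congr rfl fun ω _ => ?_
    rw [Finset.sum_eq_single (X ω)]
    · by_cases h : g (X ω, A ω, C ω) = Y ω ∧ A ω = a ∧ C ω = c
      · obtain ⟨h1, h2, h3⟩ := h
        have : (Y ω = g (X ω, a, c) ∧ X ω = X ω ∧ A ω = a ∧ C ω = c) := by
          refine ⟨?_, rfl, h2, h3⟩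
          rw [← h1, h2, h3]
        rw [if_pos this, if_pos ⟨h1, h2, h3⟩, ← h1, h2, h3]
      · have h' : ¬ (Y ω = g (X ω, a, c) ∧ X ω = X ω ∧ A ω = a ∧ C ω = c) := by
          rintro ⟨h1, -, h3, h4⟩
          exact h ⟨by rw [h3, h4, h1], h3, h4⟩
        rw [if_neg h', if_neg h, mul_zero]
    · intro x _ hx
      simp [Ne.symm hx]
    · simp
  rw [L, R]

/-- among all predictors, a derived predictor `hp` maximizes the
`θ`-weighted sum of the joint true-positive probabilities for group `a`, client `c`. -/
theorem derived_predictor_maximizes_weighted_true_positives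
    {Ω 𝒳 : Type*} [Fintype Ω] [Nonempty Ω] [Fintype 𝒳] {K N : ℕ}
    (hK : 0 < K) (hN : 0 < N)
    (μ : Ω → ℝ) (hμ : IsProbMass μ)
    (X : Ω → 𝒳) (A : Ω → Fin 2) (C : Ω → Fin K) (Y : Ω → Fin N)
    (a : Fin 2) (c : Fin K)
    (θ : Fin N → ℝ) (hθ : ∀ y, 0 ≤ θ y)
    (hp : 𝒳 × Fin 2 × Fin K → Fin N)
    (hderiv : IsDerivedPredictor μ X A C Y a c θ hp) :
    ∀ h : 𝒳 × Fin 2 × Fin K → Fin N,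
      ∑ y : Fin N, θ y *
          pr μ (fun ω => h (X ω, A ω, C ω) = y ∧ Y ω = y ∧ A ω = a ∧ C ω = c) ≤
      ∑ y : Fin N, θ y *
          pr μ (fun ω => hp (X ω, A ω, C ω) = y ∧ Y ω = y ∧ A ω = a ∧ C ω = c) := by
  intro h
  rw [sum_theta_pr μ X A C Y a c θ h, sum_theta_pr μ X A C Y a c θ hp]
  apply Finset.sum_le_sum
  intro x _
  set D := pr μ (fun ω => X ω = x ∧ A ω = a ∧ C ω = c) with hD
  rcases (pr_nonneg hμ.nonneg _).lt_or_eq with hpos | hzero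
  · have hg := (hderiv x hpos).2 (Set.mem_range_self (h (x, a, c)))
    have h2 := mul_le_mul_of_nonneg_right hg hpos.le
    have key : ∀ g : 𝒳 × Fin 2 × Fin K → Fin N,
        θ (g (x, a, c)) * score μ X A C Y a c (g (x, a, c)) x * D =
        θ (g (x, a, c)) * pr μ (fun ω => Y ω = g (x, a, c) ∧ X ω = x ∧ A ω = a ∧ C ω = c) := by
      intro g
      rw [score, mul_assoc, ← hD, div_mul_cancel₀ _ hpos.ne']
    rwa [key h, key hp] at h2
  · have hz : ∀ y : Fin N, pr μ (fun ω => Y ω = y ∧ X ω = x ∧ A ω = a ∧ C ω = c) = 0 := by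
      intro y
      refine le_antisymm ?_ (pr_nonneg hμ.nonneg _)
      rw [hzero]
      exact pr_mono hμ.nonneg fun ω hω => hω.2
    rw [hz, hz, mul_zero, mul_zero]
end

section
/- (The statistical-parity LP objective equals accuracy.) Fix a base predictor h* with μ{h*(X,A,C) = j, A = a, C = c} > 0 for all j ∈ Fin N, a ∈ Fin 2, c ∈ Fin K, and let H : Ω → Fin N be a random variable that is conditionally independent of Y given (h*(X,A,C), A, C), i.e. for all y, y', j, a, c: μ{H = y and Y = y' and h* = j and A = a and C = c} · μ{h* = j, A = a, C = c} = μ{H = y and h* = j and A = a and C = c} · μ{Y = y' and h* = j and A = a and C = c}. Then Σ_{c ∈ Fin K} Σ_{a ∈ Fin 2} Σ_{j ∈ Fin N} Σ_{y ∈ Fin N} μ{H = y | h* = j, A = a, C = c} · μ{Y = y and h* = j and A = a and C = c} = μ{ ω : H ω = Y ω }, where μ{· | E} = μ{· and E}/μ{E}. -/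
open scoped Classical
open Finset

/-- the statistical-parity LP objective equals accuracy: if `H` is
conditionally independent of `Y` given `(h*(X,A,C), A, C)`, then the LP objective equals
the accuracy `μ{H = Y}`. -/
theorem statistical_parity_objective_eq_accuracy
    {Ω 𝒳 : Type*} [Fintype Ω] [Nonempty Ω] [Fintype 𝒳] {K N : ℕ}
    (hK : 0 < K) (hN : 0 < N)
    (μ : Ω → ℝ) (hμ : IsProbMass μ)
    (X : Ω → 𝒳) (A : Ω → Fin 2) (C : Ω → Fin K) (Y : Ω → Fin N)
    (hstar : 𝒳 × Fin 2 × Fin K → Fin N)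
    (hsupp : ∀ (j : Fin N) (a : Fin 2) (c : Fin K),
      0 < pr μ (fun ω => hstar (X ω, A ω, C ω) = j ∧ A ω = a ∧ C ω = c))
    (H : Ω → Fin N)
    (hci : ∀ (y y' j : Fin N) (a : Fin 2) (c : Fin K),
      pr μ (fun ω => H ω = y ∧ Y ω = y' ∧ hstar (X ω, A ω, C ω) = j ∧
          A ω = a ∧ C ω = c) *
        pr μ (fun ω => hstar (X ω, A ω, C ω) = j ∧ A ω = a ∧ C ω = c) =
      pr μ (fun ω => H ω = y ∧ hstar (X ω, A ω, C ω) = j ∧ A ω = a ∧ C ω = c) *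
        pr μ (fun ω => Y ω = y' ∧ hstar (X ω, A ω, C ω) = j ∧ A ω = a ∧ C ω = c)) :
    ∑ c : Fin K, ∑ a : Fin 2, ∑ j : Fin N, ∑ y : Fin N,
      (pr μ (fun ω => H ω = y ∧ hstar (X ω, A ω, C ω) = j ∧ A ω = a ∧ C ω = c) /
          pr μ (fun ω => hstar (X ω, A ω, C ω) = j ∧ A ω = a ∧ C ω = c)) *
        pr μ (fun ω => Y ω = y ∧ hstar (X ω, A ω, C ω) = j ∧ A ω = a ∧ C ω = c) =
    pr μ (fun ω => H ω = Y ω) := by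
  classical
  have hterm : ∀ (c : Fin K) (a : Fin 2) (j y : Fin N),
      (pr μ (fun ω => H ω = y ∧ hstar (X ω, A ω, C ω) = j ∧ A ω = a ∧ C ω = c) /
          pr μ (fun ω => hstar (X ω, A ω, C ω) = j ∧ A ω = a ∧ C ω = c)) *
        pr μ (fun ω => Y ω = y ∧ hstar (X ω, A ω, C ω) = j ∧ A ω = a ∧ C ω = c) =
      pr μ (fun ω => H ω = y ∧ Y ω = y ∧ hstar (X ω, A ω, C ω) = j ∧ A ω = a ∧ C ω = c) := by
    intro c a j y
    have hpos := hsupp j a c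
    rw [div_mul_eq_mul_div, ← hci y y j a c, mul_div_cancel_right₀ _ hpos.ne']
  have step1 : ∑ c : Fin K, ∑ a : Fin 2, ∑ j : Fin N, ∑ y : Fin N,
      (pr μ (fun ω => H ω = y ∧ hstar (X ω, A ω, C ω) = j ∧ A ω = a ∧ C ω = c) /
          pr μ (fun ω => hstar (X ω, A ω, C ω) = j ∧ A ω = a ∧ C ω = c)) *
        pr μ (fun ω => Y ω = y ∧ hstar (X ω, A ω, C ω) = j ∧ A ω = a ∧ C ω = c) =
      ∑ c : Fin K, ∑ a : Fin 2, ∑ j : Fin N, ∑ y : Fin N,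
        pr μ (fun ω => H ω = y ∧ Y ω = y ∧ hstar (X ω, A ω, C ω) = j ∧ A ω = a ∧ C ω = c) :=
    Finset.sum_congr rfl fun c _ => Finset.sum_congr rfl fun a _ =>
      Finset.sum_congr rfl fun j _ => Finset.sum_congr rfl fun y _ => hterm c a j y
  rw [step1]
  set f : Fin K → Fin 2 → Fin N → Fin N → Ω → ℝ := fun c a j y ω =>
    @ite ℝ (H ω = y ∧ Y ω = y ∧ hstar (X ω, A ω, C ω) = j ∧ A ω = a ∧ C ω = c)
      (Classical.propDecidable _) (μ ω) 0 with hf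
  have hpr : ∀ (c : Fin K) (a : Fin 2) (j y : Fin N),
      pr μ (fun ω => H ω = y ∧ Y ω = y ∧ hstar (X ω, A ω, C ω) = j ∧ A ω = a ∧ C ω = c) =
      ∑ ω : Ω, f c a j y ω := fun c a j y => rfl
  have key : ∀ ω : Ω,
      (∑ c : Fin K, ∑ a : Fin 2, ∑ j : Fin N, ∑ y : Fin N, f c a j y ω) =
      @ite ℝ (H ω = Y ω) (Classical.propDecidable _) (μ ω) 0 := by
    intro ω
    simp only [hf]
    rw [Finset.sum_eq_single (C ω) (fun c _ hc => by simp [Ne.symm hc]) (by simp)]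
    rw [Finset.sum_eq_single (A ω) (fun a _ ha => by simp [Ne.symm ha]) (by simp)]
    rw [Finset.sum_eq_single (hstar (X ω, A ω, C ω))
      (fun j _ hj => by simp [Ne.symm hj]) (by simp)]
    rw [Finset.sum_eq_single (H ω) (fun y _ hy => by simp [Ne.symm hy]) (by simp)]
    simp [eq_comm]
  calc ∑ c : Fin K, ∑ a : Fin 2, ∑ j : Fin N, ∑ y : Fin N,
        pr μ (fun ω => H ω = y ∧ Y ω = y ∧ hstar (X ω, A ω, C ω) = j ∧ A ω = a ∧ C ω = c)
      = ∑ c : Fin K, ∑ a : Fin 2, ∑ j : Fin N, ∑ y : Fin N, ∑ ω : Ω, f c a j y ω := by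
        simp only [hpr]
    _ = ∑ c : Fin K, ∑ a : Fin 2, ∑ j : Fin N, ∑ ω : Ω, ∑ y : Fin N, f c a j y ω :=
        Finset.sum_congr rfl fun c _ => Finset.sum_congr rfl fun a _ =>
          Finset.sum_congr rfl fun j _ => Finset.sum_comm
    _ = ∑ c : Fin K, ∑ a : Fin 2, ∑ ω : Ω, ∑ j : Fin N, ∑ y : Fin N, f c a j y ω :=
        Finset.sum_congr rfl fun c _ => Finset.sum_congr rfl fun a _ => Finset.sum_comm
    _ = ∑ c : Fin K, ∑ ω : Ω, ∑ a : Fin 2, ∑ j : Fin N, ∑ y : Fin N, f c a j y ω :=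
        Finset.sum_congr rfl fun c _ => Finset.sum_comm
    _ = ∑ ω : Ω, ∑ c : Fin K, ∑ a : Fin 2, ∑ j : Fin N, ∑ y : Fin N, f c a j y ω :=
        Finset.sum_comm
    _ = ∑ ω : Ω, @ite ℝ (H ω = Y ω) (Classical.propDecidable _) (μ ω) 0 :=
        Finset.sum_congr rfl fun ω _ => key ω
    _ = pr μ (fun ω => H ω = Y ω) := rfl
end

section
/- (Laplace mechanism privacy guarantee.) Let Δ > 0 and ε > 0, and set b = Δ / ε. Then for all t, x, x' ∈ ℝ with |x − x'| ≤ Δ: (1/(2b)) · exp(−|t − x| / b) ≤ exp(ε) · (1/(2b)) · exp(−|t − x'| / b). In particular, adding Laplace noise of scale b = Δ/ε to a real-valued statistic of sensitivity Δ yields densities of the output at neighboring inputs whose ratio is bounded by e^ε. -/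
/-- Laplace mechanism privacy guarantee: for the Laplace density with
scale `b = Δ / ε`, the density at any point `t` for location `x` is at most `e^ε` times
the density at `t` for any location `x'` with `|x − x'| ≤ Δ`. -/
theorem laplace_mechanism_dp
    (Δ ε : ℝ) (hΔ : 0 < Δ) (hε : 0 < ε) (b : ℝ) (hb : b = Δ / ε) :
    ∀ t x x' : ℝ, |x - x'| ≤ Δ →
      (1 / (2 * b)) * Real.exp (-|t - x| / b) ≤
        Real.exp ε * ((1 / (2 * b)) * Real.exp (-|t - x'| / b)) := by
  intro t x x' h
  have hb0 : 0 < b := by rw [hb]; positivity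
  have hkey : |t - x'| - |t - x| ≤ Δ := by
    have := abs_sub_abs_le_abs_sub (t - x') (t - x)
    have h2 : |t - x' - (t - x)| = |x - x'| := by
      rw [show t - x' - (t - x) = x - x' by ring]
    linarith [h2 ▸ this]
  have hexp : Real.exp (-|t - x| / b) ≤ Real.exp ε * Real.exp (-|t - x'| / b) := by
    rw [← Real.exp_add, Real.exp_le_exp]
    have hΔεb : Δ = ε * b := by rw [hb]; field_simp
    have h3 : (|t - x'| - |t - x|) / b ≤ ε := by
      rw [div_le_iff₀ hb0]; nlinarith
    have e1 : (|t - x'| - |t - x|) / b = |t - x'| / b - |t - x| / b := sub_div _ _ _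
    rw [neg_div, neg_div]
    linarith
  have hc : 0 < 1 / (2 * b) := by positivity
  calc (1 / (2 * b)) * Real.exp (-|t - x| / b)
      ≤ (1 / (2 * b)) * (Real.exp ε * Real.exp (-|t - x'| / b)) := by
        exact mul_le_mul_of_nonneg_left hexp hc.le
    _ = Real.exp ε * ((1 / (2 * b)) * Real.exp (-|t - x'| / b)) := by ring
end
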